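/- Under the cover assumptions, if f ∈ ℓ²(G) satisfies Ψ_j(f) = 0 for all j ∈ J, then ‖f‖² ≤ Σ_j (θ_j/λ_{1,j}) ‖∇_j f_j‖², and consequently ‖f‖² ≤ (Θ/Λ) ⟨f, Lf⟩ where Θ = sup_j θ_j and Λ = inf_j λ_{1,j}. -/

import Mathlib

open Finset

noncomputable def lap {V : Type*} [Fintype V] (w : V → V → ℝ) (f : V → ℂ) : V → ℂ :=
  fun v => ∑ u, (f v - f u) * (w v u : ℂ)

noncomputable def gip {V : Type*} [Fintype V] (f g : V → ℂ) : ℂ :=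
  ∑ v, f v * (starRingEnd ℂ) (g v)

noncomputable def gradSq {V : Type*} [Fintype V] (w : V → V → ℝ) (f : V → ℂ) : ℝ :=
  (1 / 2) * ∑ u, ∑ v, ‖f u - f v‖ ^ 2 * w u v

noncomputable def normSq {V : Type*} [Fintype V] (f : V → ℂ) : ℝ := ∑ v, ‖f v‖ ^ 2

/-- The squared weighted gradient norm of the subgraph induced on `S`
(only edges with both ends in `S`). -/
noncomputable def gradSqOn {V : Type*} (w : V → V → ℝ) (S : Finset V) (f : V → ℂ) : ℝ :=
  (1 / 2) * ∑ u ∈ S, ∑ v ∈ S, ‖f u - f v‖ ^ 2 * w u v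

/-- `μ` is an eigenvalue of the Laplacian of the subgraph induced on `S`. -/
def IsEigenOn {V : Type*} (w : V → V → ℝ) (S : Finset V) (μ : ℝ) : Prop :=
  ∃ g : V → ℂ, g ≠ 0 ∧ (∀ v, v ∉ S → g v = 0) ∧
    ∀ v ∈ S, ∑ u ∈ S, (g v - g u) * (w v u : ℂ) = (μ : ℂ) * g v

/-- The functional `Ψ(f) = ⟨f, ψ⟩` computed over `S`. -/
noncomputable def PsiOn {V : Type*} (S : Finset V) (ψ f : V → ℂ) : ℂ :=
  ∑ v ∈ S, f v * (starRingEnd ℂ) (ψ v)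

/-- The induced subgraph on `S` (edges of nonzero weight inside `S`) is connected. -/
def IndConnected {V : Type*} (w : V → V → ℝ) (S : Finset V) : Prop :=
  (SimpleGraph.fromRel fun u v : {x : V // x ∈ S} => w u.1 v.1 ≠ 0).Connected

/-! On a part `S`, write `f = h + c • 1` with `h` of mean zero. Since `Ψ(f) = 0`, we have
`c Ψ(1) = -Ψ(h) = -⟨h, ψ - m • 1⟩` (`m` the mean of `ψ`), so Cauchy–Schwarz and Pythagoras
give `‖f_S‖² ≤ θ ‖h‖²`.
By connectedness the kernel of the induced Laplacian consists of the constants, so `h` is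
orthogonal to it and the spectral theorem gives `λ₁ ‖h‖² ≤ ‖∇h‖² = ‖∇f_S‖²`. Summing over
the disjoint parts and discarding the edges between parts gives both inequalities. -/

open scoped InnerProductSpace ComplexConjugate
open Module End

section InnerProductSpace

variable {𝕜 E : Type*} [RCLike 𝕜] [NormedAddCommGroup E] [InnerProductSpace 𝕜 E]

theorem norm_sq_mul_norm_inner_sq_le {e ψ f : E} {c : 𝕜} (hc : ⟪e, f - c • e⟫_𝕜 = 0)
    (hψf : ⟪ψ, f⟫_𝕜 = 0) :
    ‖f‖ ^ 2 * ‖⟪ψ, e⟫_𝕜‖ ^ 2 ≤ ‖e‖ ^ 2 * ‖ψ‖ ^ 2 * ‖f - c • e‖ ^ 2 := by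
  set h := f - c • e
  obtain ⟨d, hd⟩ := Submodule.mem_span_singleton.mp ((𝕜 ∙ e).starProjection_apply_mem ψ)
  set ψ' := ψ - (𝕜 ∙ e).starProjection ψ
  have hψ' : ⟪e, ψ'⟫_𝕜 = 0 := Submodule.mem_orthogonal_singleton_iff_inner_right.mp
    ((𝕜 ∙ e).sub_starProjection_mem_orthogonal ψ)
  have hf : f = h + c • e := by simp [h]
  have hψ : ψ = ψ' + d • e := by simp [ψ', hd]
  have hψ'e : ⟪ψ', e⟫_𝕜 = 0 := by rw [← inner_conj_symm, hψ', map_zero]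
  have hhe : ⟪h, e⟫_𝕜 = 0 := by rw [← inner_conj_symm, hc, map_zero]
  have pythagoras : ∀ {x : E} (a : 𝕜), ⟪x, e⟫_𝕜 = 0 →
      ‖x + a • e‖ ^ 2 = ‖x‖ ^ 2 + ‖a‖ ^ 2 * ‖e‖ ^ 2 := by
    intro x a hx
    rw [sq, sq, norm_add_sq_eq_norm_sq_add_norm_sq_of_inner_eq_zero _ _
      (by rw [inner_smul_right, hx, mul_zero]), norm_smul]
    ring
  have hψe : ‖⟪ψ, e⟫_𝕜‖ = ‖d‖ * ‖e‖ ^ 2 := by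
    rw [hψ, inner_add_left, hψ'e, zero_add, inner_smul_left, inner_self_eq_norm_sq_to_K]
    simp
  have hψ'h : ‖⟪ψ', h⟫_𝕜‖ = ‖d‖ * ‖c‖ * ‖e‖ ^ 2 := by
    rw [hψ, hf] at hψf
    simp only [inner_add_left, inner_add_right, inner_smul_left, inner_smul_right, hψ'e, hc,
      inner_self_eq_norm_sq_to_K] at hψf
    rw [show ⟪ψ', h⟫_𝕜 = -(starRingEnd 𝕜 d * c * (‖e‖ : 𝕜) ^ 2) by linear_combination hψf]
    simp
  have hCS : ‖d‖ * ‖c‖ * ‖e‖ ^ 2 ≤ ‖ψ'‖ * ‖h‖ := hψ'h ▸ norm_inner_le_norm ψ' h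
  rw [hψe, hf, pythagoras c hhe, hψ, pythagoras d hψ'e]
  nlinarith [mul_le_mul hCS hCS (by positivity) (by positivity), sq_nonneg ‖e‖]

variable [FiniteDimensional 𝕜 E] in
theorem LinearMap.IsSymmetric.mul_norm_sq_le_re_inner_map_self {T : E →ₗ[𝕜] E}
    (hT : T.IsSymmetric) {lam : ℝ} (hlam : ∀ μ : ℝ, μ ≠ 0 → HasEigenvalue T μ → lam ≤ μ)
    {x : E} (hx : ∀ y, T y = 0 → ⟪y, x⟫_𝕜 = 0) :
    lam * ‖x‖ ^ 2 ≤ RCLike.re ⟪x, T x⟫_𝕜 := by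
  obtain ⟨n, hn⟩ : ∃ n, finrank 𝕜 E = n := ⟨_, rfl⟩
  let b := hT.eigenvectorBasis hn
  have hcoord : ∀ i, ⟪x, b i⟫_𝕜 * ⟪b i, T x⟫_𝕜 =
      (hT.eigenvalues hn i * ‖⟪b i, x⟫_𝕜‖ ^ 2 : ℝ) := by
    intro i
    rw [← hT, hT.apply_eigenvectorBasis, inner_smul_left, RCLike.conj_ofReal,
      ← inner_conj_symm x (b i), RCLike.ofReal_mul, RCLike.ofReal_pow, ← RCLike.conj_mul]
    ring
  have hre : RCLike.re ⟪x, T x⟫_𝕜 = ∑ i, hT.eigenvalues hn i * ‖⟪b i, x⟫_𝕜‖ ^ 2 := by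
    rw [← b.sum_inner_mul_inner, map_sum]
    simp only [hcoord, RCLike.ofReal_re]
  rw [hre, ← b.sum_sq_norm_inner_right, Finset.mul_sum]
  refine Finset.sum_le_sum fun i _ => ?_
  by_cases hμ : hT.eigenvalues hn i = 0
  · have : T (b i) = 0 := by
      rw [hT.apply_eigenvectorBasis, hμ, RCLike.ofReal_zero, zero_smul]
    simp [hx _ this, hμ]
  · exact mul_le_mul_of_nonneg_right (hlam _ hμ (hT.hasEigenvalue_eigenvalues hn i))
      (sq_nonneg _)

end InnerProductSpace

section WeightedGraph

variable {W : Type*} [Fintype W] {w : W → W → ℝ}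

theorem sum_conj_mul_lap (hsym : ∀ u v, w u v = w v u) (f : W → ℂ) :
    ∑ v, conj (f v) * lap w f v = gradSq w f := by
  have hpair : ∀ u v, conj (f u) * ((f u - f v) * w u v) + conj (f v) * ((f v - f u) * w v u)
      = ((‖f u - f v‖ ^ 2 * w u v : ℝ) : ℂ) := by
    intro u v
    rw [hsym v u, Complex.ofReal_mul, Complex.ofReal_pow, ← Complex.conj_mul', map_sub]
    ring
  have hdouble : 2 * ∑ u, conj (f u) * lap w f u
      = ∑ u, ∑ v, ((‖f u - f v‖ ^ 2 * w u v : ℝ) : ℂ) := by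
    simp only [lap, Finset.mul_sum, ← hpair, Finset.sum_add_distrib, two_mul]
    rw [Finset.sum_comm (f := fun u v => conj (f v) * ((f v - f u) * w v u))]
  push_cast [gradSq] at hdouble ⊢
  linear_combination hdouble / 2

theorem gip_lap_self (hsym : ∀ u v, w u v = w v u) (f : W → ℂ) :
    gip f (lap w f) = gradSq w f := by
  rw [← Complex.conj_ofReal, ← sum_conj_mul_lap hsym, map_sum, gip]
  simp only [map_mul, Complex.conj_conj]

theorem gradSq_nonneg (hnn : ∀ u v, 0 ≤ w u v) (f : W → ℂ) : 0 ≤ gradSq w f := by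
  unfold gradSq
  exact mul_nonneg (by norm_num) (Finset.sum_nonneg fun u _ => Finset.sum_nonneg fun v _ =>
    mul_nonneg (sq_nonneg _) (hnn u v))

theorem gradSq_sub_const (f : W → ℂ) (c : ℂ) : gradSq w (fun v => f v - c) = gradSq w f := by
  simp only [gradSq, sub_sub_sub_cancel_right]

theorem eq_of_gradSq_eq_zero (hnn : ∀ u v, 0 ≤ w u v)
    (hconn : (SimpleGraph.fromRel fun u v => w u v ≠ 0).Connected) {f : W → ℂ}
    (hf : gradSq w f = 0) (u v : W) : f u = f v := by
  have hterm_nonneg : ∀ a b, 0 ≤ ‖f a - f b‖ ^ 2 * w a b := fun a b =>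
    mul_nonneg (sq_nonneg _) (hnn a b)
  have hsum : ∑ a, ∑ b, ‖f a - f b‖ ^ 2 * w a b = 0 := by simpa [gradSq] using hf
  rw [Fintype.sum_eq_zero_iff_of_nonneg fun a => Fintype.sum_nonneg (hterm_nonneg a)] at hsum
  have hedge : ∀ a b, w a b ≠ 0 → f a = f b := by
    intro a b hab
    have hab0 : ‖f a - f b‖ ^ 2 * w a b = 0 :=
      congrFun ((Fintype.sum_eq_zero_iff_of_nonneg (hterm_nonneg a)).mp (congrFun hsum a)) b
    simpa [hab, sub_eq_zero] using hab0
  obtain ⟨p⟩ := hconn.preconnected u v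
  induction p with
  | nil => rfl
  | cons hadj _ ih =>
    refine Eq.trans ?_ ih
    obtain ⟨-, h | h⟩ := (SimpleGraph.fromRel_adj _ _ _).mp hadj
    · exact hedge _ _ h
    · exact (hedge _ _ h).symm

noncomputable def lapLinearMap (w : W → W → ℝ) :
    EuclideanSpace ℂ W →ₗ[ℂ] EuclideanSpace ℂ W where
  toFun x := WithLp.toLp 2 (lap w x)
  map_add' x y := by
    ext v
    simp only [lap, PiLp.add_apply, ← Finset.sum_add_distrib]
    exact Finset.sum_congr rfl fun u _ => by ring
  map_smul' c x := by
    ext v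
    simp only [lap, PiLp.smul_apply, smul_eq_mul, RingHom.id_apply, Finset.mul_sum]
    exact Finset.sum_congr rfl fun u _ => by ring

theorem lapLinearMap_apply (x : EuclideanSpace ℂ W) (v : W) :
    lapLinearMap w x v = lap w x v := rfl

theorem inner_lapLinearMap_self (hsym : ∀ u v, w u v = w v u) (x : EuclideanSpace ℂ W) :
    ⟪x, lapLinearMap w x⟫_ℂ = gradSq w x := by
  rw [← sum_conj_mul_lap hsym, PiLp.inner_apply]
  simp [lapLinearMap_apply, mul_comm]

theorem lapLinearMap_isSymmetric (hsym : ∀ u v, w u v = w v u) :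
    (lapLinearMap w).IsSymmetric := by
  rw [LinearMap.isSymmetric_iff_inner_map_self_real]
  intro x
  rw [← inner_conj_symm, Complex.conj_conj, inner_lapLinearMap_self hsym, Complex.conj_ofReal]

theorem nonneg_of_hasEigenvalue_lapLinearMap (hsym : ∀ u v, w u v = w v u)
    (hnn : ∀ u v, 0 ≤ w u v) {μ : ℝ} (hμ : HasEigenvalue (lapLinearMap w) (μ : ℂ)) : 0 ≤ μ :=
  eigenvalue_nonneg_of_nonneg hμ fun x => by
    simpa [inner_lapLinearMap_self hsym] using gradSq_nonneg hnn x

theorem mul_norm_sq_le_gradSq (hsym : ∀ u v, w u v = w v u) (hnn : ∀ u v, 0 ≤ w u v)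
    (hconn : (SimpleGraph.fromRel fun u v => w u v ≠ 0).Connected) {lam : ℝ}
    (hlam : ∀ μ : ℝ, μ ≠ 0 → HasEigenvalue (lapLinearMap w) (μ : ℂ) → lam ≤ μ)
    {x : EuclideanSpace ℂ W} (hx : ∑ v, x v = 0) : lam * ‖x‖ ^ 2 ≤ gradSq w x := by
  have hker : ∀ y, lapLinearMap w y = 0 → ⟪y, x⟫_ℂ = 0 := by
    intro y hy
    obtain ⟨v₀⟩ := hconn.nonempty
    have hy0 : gradSq w y = 0 := by
      have h := inner_lapLinearMap_self hsym y
      rw [hy, inner_zero_right] at h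
      exact_mod_cast h.symm
    have hconst : ∀ v, y v = y v₀ := fun v => eq_of_gradSq_eq_zero hnn hconn hy0 v v₀
    simp [PiLp.inner_apply, hconst, ← Finset.sum_mul, hx]
  simpa [inner_lapLinearMap_self hsym] using
    (lapLinearMap_isSymmetric hsym).mul_norm_sq_le_re_inner_map_self hlam hker

end WeightedGraph

section InducedSubgraph

variable {V : Type*} {w : V → V → ℝ} {S : Finset V}

def inducedWeight (w : V → V → ℝ) (S : Finset V) : S → S → ℝ := fun u v => w u v

noncomputable def restrictLp (S : Finset V) (f : V → ℂ) : EuclideanSpace ℂ S :=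
  WithLp.toLp 2 fun v => f v

theorem norm_restrictLp_sq (f : V → ℂ) : ‖restrictLp S f‖ ^ 2 = ∑ v ∈ S, ‖f v‖ ^ 2 := by
  rw [EuclideanSpace.norm_sq_eq, ← Finset.sum_coe_sort S]
  rfl

theorem inner_restrictLp (ψ f : V → ℂ) : ⟪restrictLp S ψ, restrictLp S f⟫_ℂ = PsiOn S ψ f := by
  rw [PiLp.inner_apply, PsiOn, ← Finset.sum_coe_sort S]
  simp [restrictLp]

theorem inner_restrictLp_one_left (x : EuclideanSpace ℂ S) :
    ⟪restrictLp S (fun _ => 1), x⟫_ℂ = ∑ v, x v := by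
  simp [PiLp.inner_apply, restrictLp]

theorem gradSq_inducedWeight (f : V → ℂ) :
    gradSq (inducedWeight w S) (restrictLp S f) = gradSqOn w S f := by
  simp only [gradSq, gradSqOn, ← Finset.sum_coe_sort S]
  rfl

theorem isEigenOn_iff_hasEigenvalue {μ : ℝ} :
    IsEigenOn w S μ ↔ HasEigenvalue (lapLinearMap (inducedWeight w S)) (μ : ℂ) := by
  classical
  constructor
  · rintro ⟨g, hg0, hgS, hg⟩
    refine hasEigenvalue_of_hasEigenvector (x := restrictLp S g) ⟨mem_eigenspace_iff.mpr ?_, ?_⟩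
    · ext v
      show ∑ u : S, (g v - g u) * (w v u : ℂ) = μ * g v
      rw [Finset.sum_coe_sort S fun u => (g v - g u) * (w v u : ℂ), hg v v.2]
    · intro h0
      refine hg0 (funext fun v => ?_)
      by_cases hv : v ∈ S
      · simpa [restrictLp] using congrArg (· ⟨v, hv⟩) h0
      · exact hgS v hv
  · intro hμ
    obtain ⟨x, hx, hx0⟩ := hμ.exists_hasEigenvector
    have hxμ : ∀ v : S, ∑ u : S, (x v - x u) * (w v u : ℂ) = μ * x v := fun v =>
      congrArg (· v) (mem_eigenspace_iff.mp hx)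
    refine ⟨fun v => if hv : v ∈ S then x ⟨v, hv⟩ else 0, fun h0 => hx0 (PiLp.ext fun v => ?_),
      fun v hv => dif_neg hv, fun v hv => ?_⟩
    · simpa using congrFun h0 v
    · rw [← Finset.sum_coe_sort S]
      simpa [hv] using hxμ ⟨v, hv⟩

end InducedSubgraph

theorem sum_norm_sq_le_of_psiOn_eq_zero {V : Type*} {w : V → V → ℝ}
    (hsym : ∀ u v, w u v = w v u) (hnn : ∀ u v, 0 ≤ w u v) {S : Finset V}
    (hconn : IndConnected w S) {ψ : V → ℂ} (hΨχ : PsiOn S ψ (fun _ => 1) ≠ 0) {lam : ℝ}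
    (hlam : IsLeast {μ : ℝ | μ ≠ 0 ∧ IsEigenOn w S μ} lam) {f : V → ℂ}
    (hf : PsiOn S ψ f = 0) :
    ∑ v ∈ S, ‖f v‖ ^ 2 ≤ ((S.card : ℝ) * (∑ v ∈ S, ‖ψ v‖ ^ 2)
      / ‖PsiOn S ψ (fun _ => 1)‖ ^ 2) / lam * gradSqOn w S f := by
  have hsym' : ∀ u v, inducedWeight w S u v = inducedWeight w S v u := fun u v => hsym u v
  have hnn' : ∀ u v, 0 ≤ inducedWeight w S u v := fun u v => hnn u v
  have hlam_pos : 0 < lam := lt_of_le_of_ne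
    (nonneg_of_hasEigenvalue_lapLinearMap hsym' hnn' (isEigenOn_iff_hasEigenvalue.mp hlam.1.2))
    (Ne.symm hlam.1.1)
  set F := restrictLp S f
  set e := restrictLp S (fun _ => 1)
  set c : ℂ := ⟪e, F⟫_ℂ / ((‖e‖ ^ 2 : ℝ) : ℂ)
  have hc : ⟪e, F - c • e⟫_ℂ = 0 := by
    have := (ℂ ∙ e).sub_starProjection_mem_orthogonal F
    rwa [Submodule.starProjection_singleton, Submodule.mem_orthogonal_singleton_iff_inner_right]
      at this
  have hgap : lam * ‖F - c • e‖ ^ 2 ≤ gradSqOn w S f := by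
    have hmean : ∑ v, (F - c • e) v = 0 := (inner_restrictLp_one_left _).symm.trans hc
    have := mul_norm_sq_le_gradSq hsym' hnn' hconn
      (fun μ hμ0 hμ => hlam.2 ⟨hμ0, isEigenOn_iff_hasEigenvalue.mpr hμ⟩) hmean
    have hshift : ⇑(F - c • e) = fun v => F v - c := by
      ext v
      simp [e, restrictLp]
    rwa [hshift, gradSq_sub_const, gradSq_inducedWeight] at this
  have hkey := norm_sq_mul_norm_inner_sq_le hc
    (by rwa [inner_restrictLp] : ⟪restrictLp S ψ, F⟫_ℂ = 0)
  have he : ‖e‖ ^ 2 = S.card := by simp [e, norm_restrictLp_sq]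
  rw [he, norm_restrictLp_sq, norm_restrictLp_sq, inner_restrictLp] at hkey
  rw [div_div, div_mul_eq_mul_div, le_div_iff₀ (by positivity)]
  calc (∑ v ∈ S, ‖f v‖ ^ 2) * (‖PsiOn S ψ fun _ => 1‖ ^ 2 * lam)
      ≤ S.card * (∑ v ∈ S, ‖ψ v‖ ^ 2) * ‖F - c • e‖ ^ 2 * lam := by
        rw [← mul_assoc]; gcongr
    _ ≤ S.card * (∑ v ∈ S, ‖ψ v‖ ^ 2) * gradSqOn w S f := by
        rw [mul_assoc]; gcongr; linarith

section Partition

variable {V J : Type*} [Fintype V] [Fintype J] {S : J → Finset V}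

theorem sum_eq_sum_sum_of_cover {M : Type*} [AddCommMonoid M] (hcover : ∀ v, ∃ j, v ∈ S j)
    (hdisj : ∀ i j, i ≠ j → Disjoint (S i) (S j)) (g : V → M) :
    ∑ v, g v = ∑ j, ∑ v ∈ S j, g v := by
  classical
  rw [← Finset.sum_biUnion fun i _ j _ hij => hdisj i j hij]
  congr
  ext v
  simpa using hcover v

theorem sum_gradSqOn_le_gradSq {w : V → V → ℝ} (hnn : ∀ u v, 0 ≤ w u v)
    (hcover : ∀ v, ∃ j, v ∈ S j) (hdisj : ∀ i j, i ≠ j → Disjoint (S i) (S j)) (f : V → ℂ) :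
    ∑ j, gradSqOn w (S j) f ≤ gradSq w f := by
  calc ∑ j, gradSqOn w (S j) f
      = 1 / 2 * ∑ j, ∑ u ∈ S j, ∑ v ∈ S j, ‖f u - f v‖ ^ 2 * w u v := by
        simp only [gradSqOn, Finset.mul_sum]
    _ ≤ 1 / 2 * ∑ j, ∑ u ∈ S j, ∑ v, ‖f u - f v‖ ^ 2 * w u v := by
        gcongr with j _ u _
        · exact fun v _ _ => mul_nonneg (sq_nonneg _) (hnn u v)
        · exact Finset.subset_univ _
    _ = gradSq w f := by rw [← sum_eq_sum_sum_of_cover hcover hdisj]; rfl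

end Partition

theorem poincare_annihilating_functionals_general
    {V : Type*} [Fintype V] {J : Type*} [Fintype J] (w : V → V → ℝ)
    (hsym : ∀ u v, w u v = w v u) (hnn : ∀ u v, 0 ≤ w u v)
    (S : J → Finset V)
    (hcover : ∀ v : V, ∃ j, v ∈ S j)
    (hdisj : ∀ i j, i ≠ j → Disjoint (S i) (S j))
    (hconn : ∀ j, IndConnected w (S j))
    (ψ : J → V → ℂ)
    (hΨχ : ∀ j, PsiOn (S j) (ψ j) (fun _ => 1) ≠ 0)
    (lam : J → ℝ)
    (hlam : ∀ j, IsLeast {μ : ℝ | μ ≠ 0 ∧ IsEigenOn w (S j) μ} (lam j))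
    (Θ Λ : ℝ)
    (hΘ : IsLUB (Set.range fun j => ((S j).card : ℝ) * (∑ v ∈ S j, ‖ψ j v‖ ^ 2)
          / ‖PsiOn (S j) (ψ j) (fun _ => 1)‖ ^ 2) Θ)
    (hΛ : IsGLB (Set.range lam) Λ) (hΛpos : 0 < Λ)
    (f : V → ℂ) (hker : ∀ j, PsiOn (S j) (ψ j) f = 0) :
    normSq f ≤ ∑ j, (((S j).card : ℝ) * (∑ v ∈ S j, ‖ψ j v‖ ^ 2)
          / ‖PsiOn (S j) (ψ j) (fun _ => 1)‖ ^ 2) / lam j * gradSqOn w (S j) f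
      ∧ normSq f ≤ (Θ / Λ) * (gip f (lap w f)).re := by
  set θ := fun j => ((S j).card : ℝ) * (∑ v ∈ S j, ‖ψ j v‖ ^ 2)
    / ‖PsiOn (S j) (ψ j) (fun _ => 1)‖ ^ 2
  have hfirst : normSq f ≤ ∑ j, θ j / lam j * gradSqOn w (S j) f := by
    rw [normSq, sum_eq_sum_sum_of_cover hcover hdisj]
    exact Finset.sum_le_sum fun j _ =>
      sum_norm_sq_le_of_psiOn_eq_zero hsym hnn (hconn j) (hΨχ j) (hlam j) (hker j)
  refine ⟨hfirst, ?_⟩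
  obtain ⟨_, j₀, rfl⟩ := hΘ.nonempty
  have hΘ_nonneg : 0 ≤ Θ := (by positivity : 0 ≤ θ j₀).trans (hΘ.1 ⟨j₀, rfl⟩)
  calc normSq f ≤ ∑ j, θ j / lam j * gradSqOn w (S j) f := hfirst
    _ ≤ ∑ j, Θ / Λ * gradSqOn w (S j) f := by
        refine Finset.sum_le_sum fun j _ => mul_le_mul_of_nonneg_right
          (div_le_div₀ hΘ_nonneg (hΘ.1 ⟨j, rfl⟩) hΛpos (hΛ.1 ⟨j, rfl⟩)) ?_
        rw [← gradSq_inducedWeight]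
        exact gradSq_nonneg (w := inducedWeight w (S j)) (fun u v => hnn u v) _
    _ ≤ Θ / Λ * gradSq w f := by
        rw [← Finset.mul_sum]
        gcongr
        exact sum_gradSqOn_le_gradSq hnn hcover hdisj f
    _ = Θ / Λ * (gip f (lap w f)).re := by rw [gip_lap_self hsym, Complex.ofReal_re]

theorem poincare_annihilating_functionals
    {V : Type*} [Fintype V] {J : Type*} [Fintype J] (w : V → V → ℝ)
    (hsym : ∀ u v, w u v = w v u) (hnn : ∀ u v, 0 ≤ w u v) (hdiag : ∀ v, w v v = 0)
    (S : J → Finset V)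
    (hcover : ∀ v : V, ∃ j, v ∈ S j)
    (hdisj : ∀ i j, i ≠ j → Disjoint (S i) (S j))
    (hcard : ∀ j, 1 < (S j).card)
    (hconn : ∀ j, IndConnected w (S j))
    (ψ : J → V → ℂ) (hsupp : ∀ j v, v ∉ S j → ψ j v = 0)
    (hΨχ : ∀ j, PsiOn (S j) (ψ j) (fun _ => 1) ≠ 0)
    (lam : J → ℝ)
    (hlam : ∀ j, IsLeast {μ : ℝ | μ ≠ 0 ∧ IsEigenOn w (S j) μ} (lam j))
    (Θ Λ : ℝ)
    (hΘ : IsLUB (Set.range fun j => ((S j).card : ℝ) * (∑ v ∈ S j, ‖ψ j v‖ ^ 2)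
          / ‖PsiOn (S j) (ψ j) (fun _ => 1)‖ ^ 2) Θ)
    (hΛ : IsGLB (Set.range lam) Λ) (hΛpos : 0 < Λ)
    (f : V → ℂ) (hker : ∀ j, PsiOn (S j) (ψ j) f = 0) :
    normSq f ≤ ∑ j, (((S j).card : ℝ) * (∑ v ∈ S j, ‖ψ j v‖ ^ 2)
          / ‖PsiOn (S j) (ψ j) (fun _ => 1)‖ ^ 2) / lam j * gradSqOn w (S j) f
      ∧ normSq f ≤ (Θ / Λ) * (gip f (lap w f)).re :=
  poincare_annihilating_functionals_general w hsym hnn S hcover hdisj hconn ψ hΨχ lam hlam Θ Λ hΘ hΛ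
    hΛpos f hker
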